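/- arXiv:1809.11158 — 2 statements merged into one kernel-verified Lean document; each statement's English description precedes it below -/
import Mathlib

section
/- Any code C ⊆ F_{q^m}^N (linear or nonlinear, with |C| ≥ 2) with sum-rank length partition N = r_1 + ... + r_g satisfies the Singleton-type bound |C| ≤ q^{m(N − d_SR(C) + 1)}. -/
/-- Sum-rank weight of a block vector over `Fq`: sum over the blocks of the
`Fq`-rank of the block (i.e. the `Fq`-dimension of the span of its entries). -/
noncomputable def srWeight (Fq : Type*) [Field Fq] {F : Type*} [Field F] [Algebra Fq F]
    {g : ℕ} {r : Fin g → ℕ} (c : ∀ i : Fin g, Fin (r i) → F) : ℕ :=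
  ∑ i, Module.finrank Fq (Submodule.span Fq (Set.range (c i)))

/-- Minimum sum-rank distance of a (possibly nonlinear) code. -/
noncomputable def srMinDist (Fq : Type*) [Field Fq] {F : Type*} [Field F] [Algebra Fq F]
    {g : ℕ} {r : Fin g → ℕ} (C : Set (∀ i : Fin g, Fin (r i) → F)) : ℕ :=
  sInf {w | ∃ c ∈ C, ∃ d ∈ C, c ≠ d ∧ w = srWeight Fq (c - d)}

/-- Hamming weight of a block vector. -/
noncomputable def hamWeight {F : Type*} [Field F] [DecidableEq F]
    {g : ℕ} {r : Fin g → ℕ} (c : ∀ i : Fin g, Fin (r i) → F) : ℕ :=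
  ∑ i, (Finset.univ.filter fun j => c i j ≠ 0).card

/-- Minimum Hamming distance of a (possibly nonlinear) code. -/
noncomputable def hamMinDist {F : Type*} [Field F] [DecidableEq F]
    {g : ℕ} {r : Fin g → ℕ} (C : Set (∀ i : Fin g, Fin (r i) → F)) : ℕ :=
  sInf {w | ∃ c ∈ C, ∃ d ∈ C, c ≠ d ∧ w = hamWeight (c - d)}

/-- Blockwise multiplication of a block vector by a block-diagonal matrix
`diag(A_1, …, A_g)` with entries in the subfield `Fq`. -/
noncomputable def blockMul {Fq F : Type*} [Field Fq] [Field F] [Algebra Fq F]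
    {g : ℕ} {r n : Fin g → ℕ} (c : ∀ i : Fin g, Fin (r i) → F)
    (A : ∀ i : Fin g, Matrix (Fin (r i)) (Fin (n i)) Fq) :
    ∀ i : Fin g, Fin (n i) → F :=
  fun i j => ∑ t, c i t * algebraMap Fq F (A i t j)

/-!
The sum-rank weight of a block vector is at most its Hamming weight, since the `Fq`-span of the
entries of a block is spanned by its nonzero entries. Hence `d_SR(C) ≤ d_H(C)`, and the bound
follows from the classical Singleton bound `|C| ≤ |F|^{N - d_H(C) + 1}`: deleting any
`d_H(C) - 1` coordinates is injective on `C`.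
-/

open Finset Module Submodule

section Hamming

variable {F : Type*} [Field F] [DecidableEq F] {g : ℕ} {r : Fin g → ℕ}

theorem hamWeight_eq_card (c : ∀ i : Fin g, Fin (r i) → F) :
    hamWeight c = #{p : Σ i, Fin (r i) | c p.1 p.2 ≠ 0} := by
  rw [hamWeight, ← card_sigma]
  congr 1
  ext p
  simp

theorem hamWeight_pos {c : ∀ i : Fin g, Fin (r i) → F} (hc : c ≠ 0) : 0 < hamWeight c := by
  obtain ⟨i, j, hij⟩ : ∃ i j, c i j ≠ 0 := by
    by_contra! h
    exact hc (funext fun i => funext (h i))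
  rw [hamWeight_eq_card, card_pos]
  exact ⟨⟨i, j⟩, by simpa using hij⟩

theorem hamWeight_le_sum (c : ∀ i : Fin g, Fin (r i) → F) : hamWeight c ≤ ∑ i, r i := by
  rw [hamWeight_eq_card]
  simpa using card_le_univ (α := Σ i, Fin (r i)) _

theorem hamWeight_le_card_of_eq_zero {c : ∀ i : Fin g, Fin (r i) → F}
    {T : Finset (Σ i, Fin (r i))} (hc : ∀ p ∉ T, c p.1 p.2 = 0) : hamWeight c ≤ #T := by
  rw [hamWeight_eq_card]
  exact card_le_card fun p hp => by_contra fun hpT => (mem_filter.mp hp).2 (hc p hpT)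

theorem hamMinDist_le_hamWeight_sub {C : Set (∀ i : Fin g, Fin (r i) → F)} {c d}
    (hc : c ∈ C) (hd : d ∈ C) (hcd : c ≠ d) : hamMinDist C ≤ hamWeight (c - d) :=
  Nat.sInf_le ⟨c, hc, d, hd, hcd, rfl⟩

theorem hamMinDist_le_sum (C : Set (∀ i : Fin g, Fin (r i) → F)) :
    hamMinDist C ≤ ∑ i, r i := by
  rcases Set.eq_empty_or_nonempty {w | ∃ c ∈ C, ∃ d ∈ C, c ≠ d ∧ w = hamWeight (c - d)}
    with h | h
  · simp [hamMinDist, h]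
  · obtain ⟨c, -, d, -, -, hw⟩ := Nat.sInf_mem h
    rw [hamMinDist, hw]
    exact hamWeight_le_sum (c - d)

theorem card_le_pow_hamMinDist [Fintype F] (C : Set (∀ i : Fin g, Fin (r i) → F)) :
    Nat.card C ≤ Fintype.card F ^ ((∑ i, r i) - hamMinDist C + 1) := by
  obtain ⟨T, -, hT⟩ := exists_subset_card_eq (s := (univ : Finset (Σ i, Fin (r i))))
    (n := hamMinDist C - 1) (by simpa using (Nat.sub_le _ 1).trans (hamMinDist_le_sum C))
  have puncture_injective : Function.Injective
      fun (c : C) (p : {p // p ∉ T}) => c.1 p.1.1 p.1.2 := by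
    rintro ⟨x, hx⟩ ⟨y, hy⟩ hxy
    by_contra hne
    have hxy' : x ≠ y := fun h => hne (Subtype.ext h)
    have hmin := hamMinDist_le_hamWeight_sub hx hy hxy'
    have hpos := hamWeight_pos (sub_ne_zero.mpr hxy')
    have hT' : hamWeight (x - y) ≤ #T := hamWeight_le_card_of_eq_zero fun p hp => by
      simpa [sub_eq_zero] using congrFun hxy ⟨p, hp⟩
    omega
  calc Nat.card C ≤ Nat.card ({p // p ∉ T} → F) :=
        Nat.card_le_card_of_injective _ puncture_injective
    _ = Fintype.card F ^ ((∑ i, r i) - (hamMinDist C - 1)) := by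
        simp [Fintype.card_subtype_compl, hT]
    _ ≤ _ := Nat.pow_le_pow_right Fintype.card_pos (by omega)

end Hamming

section SumRank

variable {Fq F : Type*} [Field Fq] [Field F] [Algebra Fq F]

theorem finrank_span_range_le_card_ne_zero {ι : Type*} [Fintype ι] [DecidableEq F] (v : ι → F) :
    finrank Fq (span Fq (Set.range v)) ≤ #{j | v j ≠ 0} := by
  have hspan : span Fq (Set.range v) = span Fq (Set.range fun j : {j // v j ≠ 0} => v j) := by
    refine le_antisymm (span_le.mpr ?_) (span_mono ?_)
    · rintro _ ⟨j, rfl⟩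
      by_cases hj : v j = 0
      · simp [hj]
      · exact subset_span ⟨⟨j, hj⟩, rfl⟩
    · rintro _ ⟨j, rfl⟩
      exact ⟨j, rfl⟩
  rw [hspan, ← Fintype.card_subtype]
  exact finrank_range_le_card _

variable {g : ℕ} {r : Fin g → ℕ}

theorem srWeight_le_hamWeight [DecidableEq F] (c : ∀ i : Fin g, Fin (r i) → F) :
    srWeight Fq c ≤ hamWeight c :=
  sum_le_sum fun i _ => finrank_span_range_le_card_ne_zero (c i)

theorem srMinDist_le_hamMinDist [DecidableEq F] (C : Set (∀ i : Fin g, Fin (r i) → F)) :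
    srMinDist Fq C ≤ hamMinDist C := by
  rcases Set.eq_empty_or_nonempty {w | ∃ c ∈ C, ∃ d ∈ C, c ≠ d ∧ w = hamWeight (c - d)}
    with h | h
  · refine (Nat.sInf_eq_zero.mpr (Or.inr ?_)).trans_le (Nat.zero_le (hamMinDist C))
    refine Set.eq_empty_iff_forall_notMem.mpr ?_
    rintro _ ⟨c, hc, d, hd, hcd, -⟩
    exact Set.eq_empty_iff_forall_notMem.mp h _ ⟨c, hc, d, hd, hcd, rfl⟩
  · obtain ⟨c, hc, d, hd, hcd, hw⟩ := Nat.sInf_mem h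
    calc srMinDist Fq C ≤ srWeight Fq (c - d) := Nat.sInf_le ⟨c, hc, d, hd, hcd, rfl⟩
      _ ≤ hamWeight (c - d) := srWeight_le_hamWeight _
      _ = hamMinDist C := hw.symm

end SumRank

theorem sum_rank_singleton_bound_general
    {Fq F : Type*} [Field Fq] [Fintype Fq] [Field F] [Fintype F] [Algebra Fq F]
    {g : ℕ} {r : Fin g → ℕ} (C : Set (∀ i : Fin g, Fin (r i) → F)) :
    Nat.card C ≤
      Fintype.card Fq ^ (Module.finrank Fq F * ((∑ i, r i) - srMinDist Fq C + 1)) := by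
  classical
  have hdist := srMinDist_le_hamMinDist (Fq := Fq) C
  calc Nat.card C ≤ Fintype.card F ^ ((∑ i, r i) - hamMinDist C + 1) := card_le_pow_hamMinDist C
    _ ≤ Fintype.card F ^ ((∑ i, r i) - srMinDist Fq C + 1) :=
        Nat.pow_le_pow_right Fintype.card_pos (by omega)
    _ = _ := by rw [card_eq_pow_finrank (K := Fq), ← pow_mul]

/-- sum-rank Singleton bound `|C| ≤ q^{m(N − d_SR(C) + 1)}`. -/
theorem sum_rank_singleton_bound
    {Fq F : Type*} [Field Fq] [Fintype Fq] [Field F] [Fintype F] [Algebra Fq F]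
    {g : ℕ} {r : Fin g → ℕ} (C : Set (∀ i : Fin g, Fin (r i) → F)) (hC : C.Nontrivial) :
    Nat.card C ≤
      Fintype.card Fq ^ (Module.finrank Fq F * ((∑ i, r i) - srMinDist Fq C + 1)) :=
  sum_rank_singleton_bound_general C
end

section
/- Let C_out ⊆ F_{q^m}^N be MSRD over F_q for the partition N = Σ r_i, and let C_glob = C_out · diag(A_1,...,A_g) with full-rank A_i ∈ F_q^{r_i × n_i}. Then any erasure pattern E ⊆ [n] with Σ_{i=1}^g Rk(A_i|_{R_i}) ≥ k = log_{|F_{q^m}|}|C_out| (where R_i = Γ_i \ E) can be corrected: the restriction map from C_glob to coordinates [n] \ E is injective. -/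
/-- Rank of the submatrix of `A` given by the columns indexed by `R`. -/
noncomputable def colRank {Fq : Type*} [Field Fq] {a b : ℕ}
    (A : Matrix (Fin a) (Fin b) Fq) (R : Finset (Fin b)) : ℕ :=
  (A.submatrix id (fun j : R => (j : Fin b))).rank

/-- Restriction of a block vector to the unerased coordinates `R_i` in each block. -/
def restrictTo {F : Type*} {g : ℕ} {n : Fin g → ℕ} (R : ∀ i : Fin g, Finset (Fin (n i)))
    (c : ∀ i : Fin g, Fin (n i) → F) : ∀ i : Fin g, (R i) → F :=
  fun i j => c i j.1

lemma finrank_span_range_add_colRank_le {Fq F : Type*} [Field Fq] [Field F] [Algebra Fq F]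
    {a b : ℕ} (e : Fin a → F) (A : Matrix (Fin a) (Fin b) Fq) (R : Finset (Fin b))
    (h : ∀ j ∈ R, ∑ t, e t * algebraMap Fq F (A t j) = 0) :
    Module.finrank Fq (Submodule.span Fq (Set.range e)) + colRank A R ≤ a := by
  -- The columns of `A|_R` lie in the kernel of `x ↦ Σ xₜ eₜ`, whose range is the span of `e`.
  set φ : (Fin a → Fq) →ₗ[Fq] F := Fintype.linearCombination Fq e
  have hcols : Submodule.span Fq (Set.range (A.submatrix id (fun j : R => (j : Fin b))).transpose)
      ≤ LinearMap.ker φ := by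
    rw [Submodule.span_le]
    rintro _ ⟨j, rfl⟩
    simpa [φ, Fintype.linearCombination_apply, Algebra.smul_def, mul_comm] using h j j.2
  have hker : colRank A R ≤ Module.finrank Fq (LinearMap.ker φ) := by
    rw [colRank, Matrix.rank_eq_finrank_span_cols]
    exact Submodule.finrank_mono hcols
  have hrange : LinearMap.range φ = Submodule.span Fq (Set.range e) :=
    Fintype.range_linearCombination Fq e
  have := LinearMap.finrank_range_add_finrank_ker φ
  rw [hrange, Module.finrank_fin_fun] at this
  omega

section BlockCodes

variable {Fq F : Type*} [Field Fq] [Field F] [Algebra Fq F] {g : ℕ} {r n : Fin g → ℕ}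

lemma blockMul_sub (c d : ∀ i : Fin g, Fin (r i) → F)
    (A : ∀ i : Fin g, Matrix (Fin (r i)) (Fin (n i)) Fq) :
    blockMul (c - d) A = blockMul c A - blockMul d A := by
  ext i j
  simp only [blockMul, Pi.sub_apply, sub_mul, Finset.sum_sub_distrib]

lemma restrictTo_sub (R : ∀ i : Fin g, Finset (Fin (n i))) (x y : ∀ i : Fin g, Fin (n i) → F) :
    restrictTo R (x - y) = restrictTo R x - restrictTo R y :=
  rfl

lemma srWeight_add_sum_colRank_le (e : ∀ i : Fin g, Fin (r i) → F)
    (A : ∀ i : Fin g, Matrix (Fin (r i)) (Fin (n i)) Fq) (R : ∀ i : Fin g, Finset (Fin (n i)))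
    (he : restrictTo R (blockMul e A) = 0) :
    srWeight Fq e + ∑ i, colRank (A i) (R i) ≤ ∑ i, r i := by
  rw [srWeight, ← Finset.sum_add_distrib]
  refine Finset.sum_le_sum fun i _ => finrank_span_range_add_colRank_le (e i) (A i) (R i) ?_
  intro j hj
  exact congrFun (congrFun he i) ⟨j, hj⟩

lemma srMinDist_le_srWeight_sub {C : Set (∀ i : Fin g, Fin (r i) → F)} {c d}
    (hc : c ∈ C) (hd : d ∈ C) (hcd : c ≠ d) : srMinDist Fq C ≤ srWeight Fq (c - d) :=
  Nat.sInf_le ⟨c, hc, d, hd, hcd, rfl⟩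

theorem injOn_restrictTo_of_sub_lt_srMinDist (C : Set (∀ i : Fin g, Fin (r i) → F))
    (A : ∀ i : Fin g, Matrix (Fin (r i)) (Fin (n i)) Fq) (R : ∀ i : Fin g, Finset (Fin (n i)))
    (hC : ∑ i, r i - ∑ i, colRank (A i) (R i) < srMinDist Fq C) :
    Set.InjOn (restrictTo R) ((fun c => blockMul c A) '' C) := by
  rintro _ ⟨c, hc, rfl⟩ _ ⟨d, hd, rfl⟩ hres
  by_contra hne
  have hcd : c ≠ d := fun h => hne (h ▸ rfl)
  have hzero : restrictTo R (blockMul (c - d) A) = 0 := by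
    rw [blockMul_sub, restrictTo_sub, hres, sub_self]
  have hle := srWeight_add_sum_colRank_le (c - d) A R hzero
  have hge := srMinDist_le_srWeight_sub (Fq := Fq) hc hd hcd
  omega

end BlockCodes

theorem msrd_corrects_erasures_general
    {Fq F : Type*} [Field Fq] [Field F] [Algebra Fq F]
    {g : ℕ} {r n : Fin g → ℕ} (k : ℕ)
    (Cout : Set (∀ i : Fin g, Fin (r i) → F))
    (hd : srMinDist Fq Cout = (∑ i, r i) - k + 1)
    (A : ∀ i : Fin g, Matrix (Fin (r i)) (Fin (n i)) Fq)
    (R : ∀ i : Fin g, Finset (Fin (n i)))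
    (hrank : k ≤ ∑ i, colRank (A i) (R i)) :
    Set.InjOn (restrictTo R) ((fun c => blockMul c A) '' Cout) := by
  apply injOn_restrictTo_of_sub_lt_srMinDist
  rw [hd]
  omega

/-- if the outer code is MSRD of dimension `k` over `F_q` for the
partition `N = Σ r_i`, and the local generator matrices `A_i` are full-rank, then
every erasure pattern whose unerased coordinates `R_i` satisfy
`Σ_i Rk(A_i|_{R_i}) ≥ k` can be corrected: the restriction map to the unerased
coordinates is injective on the global code. -/
theorem msrd_corrects_erasures
    {Fq F : Type*} [Field Fq] [Fintype Fq] [Field F] [Fintype F] [Algebra Fq F]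
    {g : ℕ} {r n : Fin g → ℕ} (k : ℕ) (hk : 1 ≤ k) (hkN : k ≤ ∑ i, r i)
    (Cout : Set (∀ i : Fin g, Fin (r i) → F))
    (hcard : Nat.card Cout =
      Fintype.card Fq ^ (Module.finrank Fq F * k))
    (hd : srMinDist Fq Cout = (∑ i, r i) - k + 1)
    (A : ∀ i : Fin g, Matrix (Fin (r i)) (Fin (n i)) Fq) (hA : ∀ i, (A i).rank = r i)
    (R : ∀ i : Fin g, Finset (Fin (n i)))
    (hrank : k ≤ ∑ i, colRank (A i) (R i)) :
    Set.InjOn (restrictTo R) ((fun c => blockMul c A) '' Cout) :=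
  msrd_corrects_erasures_general k Cout hd A R hrank
end
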